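/- arXiv:1201.3667 — 5 statements merged into one kernel-verified Lean document; each statement's English description precedes it below -/
import Mathlib

section
/- In LiP, proof extension is derivable: for all messages M, M', agent a, community C, and formula φ, the formula ((M :_{a,C} φ) ∨ (M' :_{a,C} φ)) → (⟨M,M'⟩ :_{a,C} φ) is a theorem of LiP. -/
/-- Messages over agent names: names, signing, pairing. -/
inductive Msg (A : Type) : Type
  | name : A → Msg A
  | sign : Msg A → A → Msg A
  | pair : Msg A → Msg A → Msg A

/-- Formulas of LiP: atomic propositions, individual-knowledge atoms,
negation, conjunction, and the interactive proof modality `M :_{a,C} φ`. -/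
inductive Fm (A : Type) : Type
  | atom : ℕ → Fm A
  | knows : A → Msg A → Fm A
  | neg : Fm A → Fm A
  | and : Fm A → Fm A → Fm A
  | proves : Msg A → A → Finset A → Fm A → Fm A

namespace Fm

variable {A : Type}

/-- Disjunction macro. -/
def or (φ ψ : Fm A) : Fm A := neg (and (neg φ) (neg ψ))
/-- Implication macro. -/
def impl (φ ψ : Fm A) : Fm A := or (neg φ) ψ
/-- Biimplication macro. -/
def iff (φ ψ : Fm A) : Fm A := and (impl φ ψ) (impl ψ φ)

/-- Boolean evaluation treating knowledge atoms and proof-modality formulas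
as propositional atoms. -/
def eval (v : Fm A → Bool) : Fm A → Bool
  | neg φ => !eval v φ
  | and φ ψ => eval v φ && eval v ψ
  | φ => v φ

/-- Classical propositional tautology (with `knows`- and `proves`-formulas as atoms). -/
def Taut (φ : Fm A) : Prop := ∀ v : Fm A → Bool, eval v φ = true

/-- The Hilbert system LiP. -/
inductive LiP [DecidableEq A] : Fm A → Prop
  | taut {φ : Fm A} : Taut φ → LiP φ
  | knowsSelf (a : A) : LiP (knows a (Msg.name a))
  | signSynth (a : A) (M : Msg A) :
      LiP (impl (knows a M) (knows a (Msg.sign M a)))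
  | signAnal (a b : A) (M : Msg A) :
      LiP (impl (knows a (Msg.sign M b)) (knows a (Msg.pair M (Msg.name b))))
  | pairing (a : A) (M M' : Msg A) :
      LiP (iff (and (knows a M) (knows a M')) (knows a (Msg.pair M M')))
  | GK (M M' : Msg A) (a : A) (C : Finset A) (φ φ' : Fm A) :
      LiP (impl (proves M a C (impl φ φ'))
        (impl (proves M' a C φ) (proves (Msg.pair M M') a C φ')))
  | truthful (M : Msg A) (a : A) (C : Finset A) (φ : Fm A) :
      LiP (impl (proves M a C φ) (impl (knows a M) φ))
  | peer (M : Msg A) (a : A) (C : Finset A) (φ : Fm A) {b : A}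
      (hb : b ∈ C ∪ {a}) :
      LiP (impl (proves M a C φ)
        (proves (Msg.sign M a) b (C ∪ {a}) (and (knows a M) (proves M a C φ))))
  | groupDecomp (M : Msg A) (a : A) (C C' : Finset A) (φ : Fm A) :
      LiP (impl (proves M a (C ∪ C') φ) (proves M a C φ))
  | mp {φ ψ : Fm A} : LiP (impl φ ψ) → LiP φ → LiP ψ
  | nec {φ : Fm A} (M : Msg A) (a : A) (C : Finset A) :
      LiP φ → LiP (proves M a C φ)
  | antiton {a : A} {M M' : Msg A} (C : Finset A) (φ : Fm A) :
      LiP (impl (knows a M) (knows a M')) →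
      LiP (impl (proves M' a C φ) (proves M a C φ))

end Fm

variable {A : Type} [DecidableEq A] [Fintype A] [Nonempty A]

open Fm Msg

/-! Knowing ⟨M, M'⟩ entails knowing M and M' (pairing axiom), so by epistemic antitonicity a
proof with M or with M' is also a proof with ⟨M, M'⟩; the disjunction is eliminated
propositionally. -/

namespace Fm

section Taut

variable {A : Type}

theorem taut_iff_and_imp_left (p q r : Fm A) : Taut (impl (iff (and p q) r) (impl r p)) := by
  intro v
  simp only [impl, or, iff, eval]
  cases eval v p <;> cases eval v q <;> cases eval v r <;> rfl

theorem taut_iff_and_imp_right (p q r : Fm A) : Taut (impl (iff (and p q) r) (impl r q)) := by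
  intro v
  simp only [impl, or, iff, eval]
  cases eval v p <;> cases eval v q <;> cases eval v r <;> rfl

theorem taut_or_elim (p q r : Fm A) :
    Taut (impl (impl p r) (impl (impl q r) (impl (or p q) r))) := by
  intro v
  simp only [impl, or, eval]
  cases eval v p <;> cases eval v q <;> cases eval v r <;> rfl

end Taut

namespace LiP

variable {A : Type} [DecidableEq A]

theorem imp_left_of_iff_and {p q r : Fm A} (h : LiP (iff (and p q) r)) : LiP (impl r p) :=
  mp (taut (taut_iff_and_imp_left p q r)) h

theorem imp_right_of_iff_and {p q r : Fm A} (h : LiP (iff (and p q) r)) : LiP (impl r q) :=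
  mp (taut (taut_iff_and_imp_right p q r)) h

theorem or_elim {p q r : Fm A} (hp : LiP (impl p r)) (hq : LiP (impl q r)) :
    LiP (impl (or p q) r) :=
  mp (mp (taut (taut_or_elim p q r)) hp) hq

theorem knows_of_knows_pair_left (a : A) (M M' : Msg A) :
    LiP (impl (knows a (pair M M')) (knows a M)) :=
  imp_left_of_iff_and (pairing a M M')

theorem knows_of_knows_pair_right (a : A) (M M' : Msg A) :
    LiP (impl (knows a (pair M M')) (knows a M')) :=
  imp_right_of_iff_and (pairing a M M')

theorem proves_pair_of_proves_left (a : A) (M M' : Msg A) (C : Finset A) (φ : Fm A) :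
    LiP (impl (proves M a C φ) (proves (pair M M') a C φ)) :=
  antiton C φ (knows_of_knows_pair_left a M M')

theorem proves_pair_of_proves_right (a : A) (M M' : Msg A) (C : Finset A) (φ : Fm A) :
    LiP (impl (proves M' a C φ) (proves (pair M M') a C φ)) :=
  antiton C φ (knows_of_knows_pair_right a M M')

end LiP

end Fm

theorem lip_proof_extension (a : A) (M M' : Msg A) (C : Finset A) (φ : Fm A) :
    LiP (impl (Fm.or (proves M a C φ) (proves M' a C φ))
      (proves (Msg.pair M M') a C φ)) :=
  LiP.or_elim (LiP.proves_pair_of_proves_left a M M' C φ)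
    (LiP.proves_pair_of_proves_right a M M' C φ)
end

section
/- In LiP, proof commutativity is derivable: for all messages M, M', agent a, community C, and formula φ, (⟨M,M'⟩ :_{a,C} φ) ↔ (⟨M',M⟩ :_{a,C} φ) is a theorem of LiP. -/
variable {A : Type} [DecidableEq A] [Fintype A] [Nonempty A]

open Fm Msg

namespace Fm
variable {A : Type} [DecidableEq A]

lemma taut_pair_comm (k k' p q : Fm A) :
    Taut (impl (Fm.iff (and k k') p) (impl (Fm.iff (and k' k) q) (impl p q))) := by
  intro v
  simp only [eval, Fm.iff, impl, or]
  cases eval v k <;> cases eval v k' <;> cases eval v p <;> cases eval v q <;> rfl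

lemma knows_pair_comm (a : A) (M M' : Msg A) :
    LiP (impl (knows a (Msg.pair M M')) (knows a (Msg.pair M' M))) :=
  LiP.mp (LiP.mp (LiP.taut (taut_pair_comm _ _ _ _)) (LiP.pairing a M M'))
    (LiP.pairing a M' M)

lemma taut_combine (p q : Fm A) :
    Taut (impl (impl p q) (impl (impl q p) (Fm.iff p q))) := by
  intro v
  simp only [eval, Fm.iff, impl, or]
  cases eval v p <;> cases eval v q <;> rfl

end Fm


theorem lip_proof_commutativity (a : A) (M M' : Msg A) (C : Finset A) (φ : Fm A) :
    LiP (Fm.iff (proves (Msg.pair M M') a C φ) (proves (Msg.pair M' M) a C φ)) :=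
  LiP.mp
    (LiP.mp (LiP.taut (taut_combine _ _))
      (LiP.antiton C φ (knows_pair_comm a M' M)))
    (LiP.antiton C φ (knows_pair_comm a M M'))
end

section
/- In LiP, the self-neutral proof element law is derivable: for all messages M, agent a, community C, and formula φ, (⟨M,a⟩ :_{a,C} φ) ↔ (M :_{a,C} φ) is a theorem of LiP. -/
variable {A : Type} [DecidableEq A] [Fintype A] [Nonempty A]

open Fm Msg
section Helpers
variable {A : Type} [DecidableEq A]
open Fm

lemma lip_imp_trans {p q r : Fm A} (h1 : LiP (impl p q)) (h2 : LiP (impl q r)) :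
    LiP (impl p r) := by
  have ht : Taut (impl (impl p q) (impl (impl q r) (impl p r))) := by
    intro v
    simp only [Fm.impl, Fm.or, Fm.eval]
    cases eval v p <;> cases eval v q <;> cases eval v r <;> simp
  exact ((LiP.taut ht).mp h1).mp h2

lemma lip_iff_mp {p q : Fm A} (h : LiP (Fm.iff p q)) : LiP (impl p q) := by
  have ht : Taut (impl (Fm.iff p q) (impl p q)) := by
    intro v
    simp only [Fm.iff, Fm.impl, Fm.or, Fm.eval]
    cases eval v p <;> cases eval v q <;> simp
  exact (LiP.taut ht).mp h

lemma lip_iff_mpr {p q : Fm A} (h : LiP (Fm.iff p q)) : LiP (impl q p) := by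
  have ht : Taut (impl (Fm.iff p q) (impl q p)) := by
    intro v
    simp only [Fm.iff, Fm.impl, Fm.or, Fm.eval]
    cases eval v p <;> cases eval v q <;> simp
  exact (LiP.taut ht).mp h

lemma lip_iff_intro {p q : Fm A} (h1 : LiP (impl p q)) (h2 : LiP (impl q p)) :
    LiP (Fm.iff p q) := by
  have ht : Taut (impl (impl p q) (impl (impl q p) (Fm.iff p q))) := by
    intro v
    simp only [Fm.iff, Fm.impl, Fm.or, Fm.eval]
    cases eval v p <;> cases eval v q <;> simp
  exact ((LiP.taut ht).mp h1).mp h2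

lemma lip_and_left {p q : Fm A} : LiP (impl (Fm.and p q) p) := by
  apply LiP.taut
  intro v
  simp only [Fm.impl, Fm.or, Fm.eval]
  cases eval v p <;> cases eval v q <;> simp

lemma lip_and_intro_right {p q : Fm A} (h : LiP q) : LiP (impl p (Fm.and p q)) := by
  have ht : Taut (impl q (impl p (Fm.and p q))) := by
    intro v
    simp only [Fm.impl, Fm.or, Fm.eval]
    cases eval v p <;> cases eval v q <;> simp
  exact (LiP.taut ht).mp h

end Helpers


theorem lip_self_neutral_proof_element (a : A) (M : Msg A) (C : Finset A) (φ : Fm A) :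
    LiP (Fm.iff (proves (Msg.pair M (Msg.name a)) a C φ) (proves M a C φ)) := by
  have hpair := LiP.pairing a M (Msg.name a)
  -- knows a (pair M (name a)) → knows a M
  have h1 : LiP (impl (knows a (Msg.pair M (Msg.name a))) (knows a M)) :=
    lip_imp_trans (lip_iff_mpr hpair) lip_and_left
  -- knows a M → knows a (pair M (name a))
  have h2 : LiP (impl (knows a M) (knows a (Msg.pair M (Msg.name a)))) :=
    lip_imp_trans (lip_and_intro_right (LiP.knowsSelf a)) (lip_iff_mp hpair)
  exact lip_iff_intro (LiP.antiton C φ h2) (LiP.antiton C φ h1)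
end

section
/- In LiP, self-knowledge is derivable: for every agent a and message M, the formula M :_{a,∅} (a knows M) is a theorem of LiP. -/
variable {A : Type} [DecidableEq A] [Fintype A] [Nonempty A]

open Fm Msg

theorem lip_self_knowledge (a : A) (M : Msg A) :
    LiP (proves M a (∅ : Finset A) (knows a M)) := by
  -- a trivial tautology
  have h0 : LiP (A := A) (impl (atom 0) (atom 0)) := by
    apply LiP.taut; intro v
    simp [Fm.eval, Fm.impl, Fm.or]
  -- necessitate it
  have h1 : LiP (proves M a (∅ : Finset A) (impl (atom 0) (atom 0))) :=
    LiP.nec M a ∅ h0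
  set ψ : Fm A := and (knows a M) (proves M a ∅ (impl (atom 0) (atom 0))) with hψ
  -- peer review with b = a
  have h2 : LiP (proves (Msg.sign M a) a ((∅ : Finset A) ∪ {a}) ψ) :=
    LiP.mp (LiP.peer M a ∅ _ (by simp)) h1
  -- group decomposition
  have h3 : LiP (proves (Msg.sign M a) a (∅ : Finset A) ψ) :=
    LiP.mp (LiP.groupDecomp (Msg.sign M a) a ∅ {a} ψ) h2
  -- antitonicity via signature synthesis
  have h4 : LiP (proves M a (∅ : Finset A) ψ) :=
    LiP.mp (LiP.antiton ∅ ψ (LiP.signSynth a M)) h3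
  -- ψ → knows a M is a tautology
  have h5 : LiP (proves M a (∅ : Finset A) (impl ψ (knows a M))) := by
    apply LiP.nec
    apply LiP.taut
    intro v
    simp [Fm.eval, Fm.impl, Fm.or, hψ]
    cases v (knows a M) <;> simp [Fm.eval]
  -- GK
  have h6 : LiP (proves (Msg.pair M M) a (∅ : Finset A) (knows a M)) :=
    LiP.mp (LiP.mp (LiP.GK M M a ∅ ψ (knows a M)) h5) h4
  -- knows a M → knows a (pair M M)
  have hpair : LiP (impl (knows a M) (knows a (Msg.pair M M))) := by
    have hp := LiP.pairing a M M
    have ht : LiP (A := A) (impl (iff (and (knows a M) (knows a M)) (knows a (Msg.pair M M)))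
        (impl (knows a M) (knows a (Msg.pair M M)))) := by
      apply LiP.taut
      intro v
      simp [Fm.eval, Fm.impl, Fm.or, Fm.iff]
      cases v (knows a M) <;> cases v (knows a (Msg.pair M M)) <;> simp [Fm.eval]
    exact LiP.mp ht hp
  exact LiP.mp (LiP.antiton ∅ (knows a M) hpair) h6
end

section
/- In LiP, the self-neutral group element law is derivable: for all M, a, C, φ, (M :_{a,C∪{a}} φ) ↔ (M :_{a,C} φ) is a theorem of LiP. -/
variable {A : Type} [DecidableEq A] [Fintype A] [Nonempty A]

open Fm Msg

namespace Fm

lemma eval_neg (v : Fm A → Bool) (φ : Fm A) : eval v (neg φ) = !eval v φ := rfl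
lemma eval_and (v : Fm A → Bool) (φ ψ : Fm A) :
    eval v (and φ ψ) = (eval v φ && eval v ψ) := rfl
lemma eval_impl (v : Fm A → Bool) (φ ψ : Fm A) :
    eval v (impl φ ψ) = (!eval v φ || eval v ψ) := by
  simp [impl, or, eval_neg, eval_and]

lemma LiP.trans' {φ ψ χ : Fm A} (h1 : LiP (impl φ ψ)) (h2 : LiP (impl ψ χ)) :
    LiP (impl φ χ) := by
  have t : Taut (impl (impl φ ψ) (impl (impl ψ χ) (impl φ χ))) := by
    intro v
    simp only [eval_impl]
    cases eval v φ <;> cases eval v ψ <;> cases eval v χ <;> rfl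
  exact LiP.mp (LiP.mp (LiP.taut t) h1) h2

lemma LiP.iff_intro {φ ψ : Fm A} (h1 : LiP (impl φ ψ)) (h2 : LiP (impl ψ φ)) :
    LiP (Fm.iff φ ψ) := by
  have t : Taut (impl (impl φ ψ) (impl (impl ψ φ) (Fm.iff φ ψ))) := by
    intro v
    simp only [Fm.iff, eval_impl, eval_and]
    cases eval v φ <;> cases eval v ψ <;> rfl
  exact LiP.mp (LiP.mp (LiP.taut t) h1) h2

end Fm

theorem lip_self_neutral_group_element (a : A) (M : Msg A) (C : Finset A) (φ : Fm A) :
    LiP (Fm.iff (proves M a (C ∪ {a}) φ) (proves M a C φ)) := by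
  set K := knows a M with hK
  set P := proves M a C φ with hP
  set G : Finset A := C ∪ {a} with hG
  -- forward direction: group decomposition
  have fwd : LiP (impl (proves M a G φ) P) := LiP.groupDecomp M a C {a} φ
  -- backward direction
  have hb : a ∈ C ∪ ({a} : Finset A) :=
    Finset.mem_union_right _ (Finset.mem_singleton_self a)
  have h1 : LiP (impl P (proves (Msg.sign M a) a G (Fm.and K P))) :=
    LiP.peer M a C φ hb
  have h2 : LiP (impl (proves (Msg.sign M a) a G (Fm.and K P)) (proves M a G (Fm.and K P))) :=
    LiP.antiton G _ (LiP.signSynth a M)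
  have h3 : LiP (impl P (proves M a G (Fm.and K P))) := h1.trans' h2
  -- (K ∧ P) → φ from truthfulness
  have tr : LiP (impl P (impl K φ)) := LiP.truthful M a C φ
  have h4 : LiP (impl (Fm.and K P) φ) := by
    have t : Taut (impl (impl P (impl K φ)) (impl (Fm.and K P) φ)) := by
      intro v
      simp only [Fm.eval_impl, Fm.eval_and]
      cases Fm.eval v P <;> cases Fm.eval v K <;> cases Fm.eval v φ <;> rfl
    exact LiP.mp (LiP.taut t) tr
  have h5 : LiP (proves M a G (impl (Fm.and K P) φ)) := LiP.nec M a G h4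
  have h6 : LiP (impl (proves M a G (Fm.and K P)) (proves (Msg.pair M M) a G φ)) :=
    LiP.mp (LiP.GK M M a G (Fm.and K P) φ) h5
  -- knows a M → knows a (pair M M)
  have hp : LiP (impl K (knows a (Msg.pair M M))) := by
    have base := LiP.pairing a M M
    have t : Taut (impl (Fm.iff (Fm.and K K) (knows a (Msg.pair M M)))
        (impl K (knows a (Msg.pair M M)))) := by
      intro v
      simp only [Fm.iff, Fm.eval_impl, Fm.eval_and]
      cases Fm.eval v K <;> cases Fm.eval v (knows a (Msg.pair M M)) <;> rfl
    exact LiP.mp (LiP.taut t) base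
  have h7 : LiP (impl (proves (Msg.pair M M) a G φ) (proves M a G φ)) :=
    LiP.antiton G φ hp
  have bwd : LiP (impl P (proves M a G φ)) := (h3.trans' h6).trans' h7
  exact LiP.iff_intro fwd bwd
end
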